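/- arXiv:0905.0685 — 2 statements merged into one kernel-verified Lean document; each statement's English description precedes it below -/
import Mathlib

section
/- Let R be a Cohen–Macaulay noetherian local ring with dualizing module D, and let C be a semidualizing R-module with C not free and not dualizing. Set C† = Hom_R(C,D), R₁ = R ⋉ C, and D₁ = Hom_R(R₁, D). Then there is an R-module isomorphism D₁ ≅ C† ⊕ D, and under this identification the R₁-module structure on C† ⊕ D is given by (r,c)·(φ,d) = (rφ, φ(c) + rd). -/
/-- Depth: supremum of lengths of regular sequences in the maximal ideal. -/
noncomputable def moduleDepth (R : Type) [CommRing R] [IsLocalRing R]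
    (M : Type) [AddCommGroup M] [Module R M] : ℕ∞ :=
  sSup {n : ℕ∞ | ∃ rs : List R, (rs.length : ℕ∞) = n ∧
    (∀ r ∈ rs, r ∈ IsLocalRing.maximalIdeal R) ∧ RingTheory.Sequence.IsRegular M rs}

open CategoryTheory in
/-- A finitely generated module `C` is semidualizing if the homothety map
`R → Hom_R(C,C)` is bijective and `Ext^i_R(C,C) = 0` for all `i ≥ 1`. -/
def IsSemidualizing (R : Type) [CommRing R] (C : Type) [AddCommGroup C] [Module R C] : Prop :=
  Module.Finite R C ∧
  Function.Bijective (fun r : R => r • (LinearMap.id : C →ₗ[R] C)) ∧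
  ∀ i : ℕ, 1 ≤ i →
    Subsingleton (((Ext R (ModuleCat R) i).obj
      (Opposite.op (ModuleCat.of R C))).obj (ModuleCat.of R C))

open CategoryTheory in
/-- Finite injective dimension, via uniform vanishing of `Ext^i(-, D)`. -/
def HasFiniteInjectiveDimension (R : Type) [CommRing R]
    (D : Type) [AddCommGroup D] [Module R D] : Prop :=
  ∃ n : ℕ, ∀ (N : ModuleCat R) (i : ℕ), n < i →
    Subsingleton (((Ext R (ModuleCat R) i).obj (Opposite.op N)).obj (ModuleCat.of R D))

/-- A dualizing module is a semidualizing module of finite injective dimension. -/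
def IsDualizing (R : Type) [CommRing R] (D : Type) [AddCommGroup D] [Module R D] : Prop :=
  IsSemidualizing R D ∧ HasFiniteInjectiveDimension R D

/-- Let `R` be Cohen-Macaulay local with dualizing module `D` and `C` a
semidualizing module that is neither free nor dualizing.  With `R₁ = R ⋉ C` and
`D₁ = Hom_R(R₁, D)`, there is an `R`-module isomorphism `D₁ ≅ C† × D` under which the
`R₁`-action `((r,c) • f)(x) = f((r,c) * x)` becomes `(r,c) • (φ, d) = (r φ, φ c + r d)`. -/
theorem dualizing_module_of_trivial_extension
    (R : Type) [CommRing R] [IsLocalRing R] [IsNoetherianRing R]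
    (hCM : (moduleDepth R R : WithBot ℕ∞) = ringKrullDim R)
    (C D : Type) [AddCommGroup C] [Module R C] [Module Rᵐᵒᵖ C] [IsCentralScalar R C]
    [AddCommGroup D] [Module R D]
    (hC : IsSemidualizing R C) (hD : IsDualizing R D)
    (hCnotfree : ¬ Module.Free R C) (hCnotdual : ¬ IsDualizing R C) :
    ∃ e : (TrivSqZeroExt R C →ₗ[R] D) ≃ₗ[R] ((C →ₗ[R] D) × D),
      ∀ (r : R) (c : C) (f : TrivSqZeroExt R C →ₗ[R] D),
        e (f ∘ₗ LinearMap.mulLeft R (TrivSqZeroExt.inl r + TrivSqZeroExt.inr c)) =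
          (r • (e f).1, (e f).1 c + r • (e f).2) := by
  refine ⟨{ toFun := fun f => (f ∘ₗ TrivSqZeroExt.inrHom R C, f (TrivSqZeroExt.inl 1)),
            map_add' := fun f g => by ext <;> simp,
            map_smul' := fun r f => by ext <;> simp,
            invFun := fun p => p.1 ∘ₗ TrivSqZeroExt.sndHom R C +
              ((TrivSqZeroExt.fstHom R R C).toLinearMap).smulRight p.2,
            left_inv := fun f => by
              ext x
              have hx : x = TrivSqZeroExt.inl x.fst + TrivSqZeroExt.inr x.snd :=
                (TrivSqZeroExt.inl_fst_add_inr_snd_eq x).symm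
              have h1 : TrivSqZeroExt.inl (M := C) x.fst = x.fst • TrivSqZeroExt.inl 1 := by
                ext <;> simp
              simp only [LinearMap.add_apply, LinearMap.coe_comp, Function.comp_apply,
                TrivSqZeroExt.sndHom_apply, LinearMap.smulRight_apply]
              conv_rhs => rw [hx]
              rw [map_add, h1, map_smul]
              simp [add_comm]
            right_inv := fun p => by
              ext c' <;> simp }, ?_⟩
  intro r c f
  have key : ∀ x : TrivSqZeroExt R C,
      (TrivSqZeroExt.inl r + TrivSqZeroExt.inr c) * x =
        TrivSqZeroExt.inl (r * x.fst) + TrivSqZeroExt.inr (r • x.snd + x.fst • c) := by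
    intro x
    ext
    · simp
    · simp [TrivSqZeroExt.snd_mul, op_smul_eq_smul]
  simp only [LinearEquiv.coe_mk, LinearMap.coe_mk, AddHom.coe_mk]
  refine Prod.ext ?_ ?_
  · ext c'
    simp only [LinearMap.coe_comp, Function.comp_apply, TrivSqZeroExt.inrHom_apply,
      LinearMap.mulLeft_apply, LinearMap.smul_apply]
    rw [key]
    simp [map_smul]
  · simp only [LinearMap.coe_comp, Function.comp_apply, LinearMap.mulLeft_apply]
    rw [key]
    simp only [TrivSqZeroExt.fst_inl, TrivSqZeroExt.snd_inl, mul_one, smul_zero, zero_add,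
      one_smul, map_add]
    have h1 : TrivSqZeroExt.inl (M := C) r = r • TrivSqZeroExt.inl 1 := by
      ext <;> simp
    rw [h1, map_smul]
    exact add_comm _ _
end

section
/- Let R be a Cohen–Macaulay noetherian local ring with dualizing module D, and C a semidualizing R-module that is neither free nor dualizing. Set R₁ = R ⋉ C. Then R₁ is not Gorenstein; equivalently its dualizing module D₁ ≅ C† ⊕ D (C† = Hom_R(C,D)) is not isomorphic to R₁ ≅ R ⊕ C as an R₁-module. -/
section MulActionOnHom

variable (R : Type) [CommRing R] (A : Type) [CommRing A] [Algebra R A]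
  (D' : Type) [AddCommGroup D'] [Module R D']

/-- The action of an `R`-algebra `A` on `Hom_R(A, D')` by precomposition with
multiplication: `(a • f) x = f (a * x)`. -/
noncomputable instance homSMul : SMul A (A →ₗ[R] D') :=
  ⟨fun a f => f ∘ₗ LinearMap.mulLeft R a⟩

lemma homSMul_apply (a : A) (f : A →ₗ[R] D') (x : A) : (a • f) x = f (a * x) := rfl

noncomputable instance homModule : Module A (A →ₗ[R] D') where
  one_smul f := by ext x; simp [homSMul_apply]
  mul_smul a b f := by ext x; simp [homSMul_apply, mul_assoc, mul_left_comm]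
  smul_zero a := by ext x; simp [homSMul_apply]
  smul_add a f g := by ext x; simp [homSMul_apply]
  add_smul a b f := by ext x; simp [homSMul_apply, add_mul]
  zero_smul f := by ext x; simp [homSMul_apply]

noncomputable instance homModuleOp : Module Aᵐᵒᵖ (A →ₗ[R] D') :=
  Module.compHom _ ((RingHom.id A).fromOpposite mul_comm)

instance homCentral : IsCentralScalar A (A →ₗ[R] D') := ⟨fun _ _ => rfl⟩

end MulActionOnHom

open TrivSqZeroExt in
/-- Let `R` be Cohen-Macaulay noetherian local with dualizing module
`D` and `C` a semidualizing module that is neither free nor dualizing.  Then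
`R₁ = R ⋉ C` is not Gorenstein: its dualizing module `D₁ = Hom_R(R₁, D)` (an
`R₁`-module via `(a • f) x = f (a x)`) is not isomorphic to `R₁` as an `R₁`-module. -/
theorem trivial_extension_not_gorenstein
    (R : Type) [CommRing R] [IsLocalRing R] [IsNoetherianRing R]
    (hCM : (moduleDepth R R : WithBot ℕ∞) = ringKrullDim R)
    (C D : Type) [AddCommGroup C] [Module R C] [Module Rᵐᵒᵖ C] [IsCentralScalar R C]
    [AddCommGroup D] [Module R D]
    (hC : IsSemidualizing R C) (hD : IsDualizing R D)
    (hCnotfree : ¬ Module.Free R C) (hCnotdual : ¬ IsDualizing R C) :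
    ¬ Nonempty ((TrivSqZeroExt R C →ₗ[R] D) ≃ₗ[TrivSqZeroExt R C] TrivSqZeroExt R C) := by
  
  rintro ⟨e⟩
  apply hCnotdual
  -- C is faithful, from injectivity of the homothety map
  have hfaith : ∀ r : R, (∀ c : C, r • c = 0) → r = 0 := by
    intro r h
    have : r • (LinearMap.id : C →ₗ[R] C) = (0 : R) • LinearMap.id := by
      ext c; simpa using h c
    exact hC.2.1.1 this
  -- key multiplication lemma
  have hmul : ∀ (c : C) (x : TrivSqZeroExt R C),
      (TrivSqZeroExt.inr c : TrivSqZeroExt R C) * x = TrivSqZeroExt.inr (x.fst • c) := by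
    intro c x
    refine TrivSqZeroExt.ext ?_ ?_
    · simp [TrivSqZeroExt.fst_mul]
    · simp [TrivSqZeroExt.snd_mul, op_smul_eq_smul]
  have hsmul_one : ∀ r : R, r • (1 : TrivSqZeroExt R C) = TrivSqZeroExt.inl r := by
    intro r
    refine TrivSqZeroExt.ext ?_ ?_ <;> simp
  -- the candidate map C → D
  have key : ∀ c : C, ∀ c' : C, (e.symm (TrivSqZeroExt.inr c)) (TrivSqZeroExt.inr c') = 0 := by
    intro c c'
    have h0 : (TrivSqZeroExt.inr c' : TrivSqZeroExt R C) • e.symm (TrivSqZeroExt.inr c) = 0 := by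
      rw [← map_smul]
      have : (TrivSqZeroExt.inr c' : TrivSqZeroExt R C) • (TrivSqZeroExt.inr c : TrivSqZeroExt R C)
          = 0 := by
        rw [smul_eq_mul, TrivSqZeroExt.inr_mul_inr]
      rw [this, map_zero]
    have := congrArg (fun f : TrivSqZeroExt R C →ₗ[R] D => f 1) h0
    simpa [homSMul_apply] using this
  let g : C →ₗ[R] D :=
  { toFun := fun c => (e.symm (TrivSqZeroExt.inr c)) 1
    map_add' := by
      intro c c'
      show (e.symm (TrivSqZeroExt.inr (c + c'))) 1
        = (e.symm (TrivSqZeroExt.inr c)) 1 + (e.symm (TrivSqZeroExt.inr c')) 1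
      rw [TrivSqZeroExt.inr_add, map_add]; rfl
    map_smul' := by
      intro r c
      show (e.symm (TrivSqZeroExt.inr (r • c))) 1 = r • (e.symm (TrivSqZeroExt.inr c)) 1
      have h1 : (TrivSqZeroExt.inr (r • c) : TrivSqZeroExt R C)
          = (TrivSqZeroExt.inl r : TrivSqZeroExt R C) • TrivSqZeroExt.inr c := by
        rw [smul_eq_mul, TrivSqZeroExt.inl_mul_inr]
      rw [h1, map_smul]
      show (TrivSqZeroExt.inl r • e.symm (TrivSqZeroExt.inr c)) 1 = _
      rw [homSMul_apply, mul_one, ← hsmul_one, map_smul] }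
  have hg_inj : Function.Injective g := by
    intro c c' h
    rw [← sub_eq_zero] at h ⊢
    rw [← map_sub] at h
    set c₀ := c - c' with hc₀
    have hg0 : g c₀ = 0 := h
    have hf0 : e.symm (TrivSqZeroExt.inr c₀) = 0 := by
      ext x
      have hx : x = TrivSqZeroExt.inl x.fst + TrivSqZeroExt.inr x.snd :=
        (TrivSqZeroExt.inl_fst_add_inr_snd_eq x).symm
      rw [hx, map_add, key c₀ x.snd, add_zero, ← hsmul_one, map_smul]
      have : (e.symm (TrivSqZeroExt.inr c₀)) 1 = 0 := hg0
      rw [this, smul_zero]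
      rfl
    have : (TrivSqZeroExt.inr c₀ : TrivSqZeroExt R C) = 0 := by
      have := congrArg e hf0
      simpa using this
    have := congrArg TrivSqZeroExt.snd this
    simpa using this
  have hg_surj : Function.Surjective g := by
    intro d
    let fd : TrivSqZeroExt R C →ₗ[R] D :=
    { toFun := fun x => x.fst • d
      map_add' := by intro x y; simp [add_smul]
      map_smul' := by intro r x; simp [mul_smul] }
    set a := e fd with ha
    have hfsta : a.fst = 0 := by
      apply hfaith
      intro c'
      have h0 : (TrivSqZeroExt.inr c' : TrivSqZeroExt R C) • fd = 0 := by
        ext x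
        show fd (TrivSqZeroExt.inr c' * x) = 0
        rw [hmul]
        show (TrivSqZeroExt.inr (x.fst • c') : TrivSqZeroExt R C).fst • d = 0
        simp
      have h1 : (TrivSqZeroExt.inr c' : TrivSqZeroExt R C) * a = 0 := by
        rw [← smul_eq_mul, ha, ← map_smul, h0, map_zero]
      rw [hmul] at h1
      have := congrArg TrivSqZeroExt.snd h1
      simpa using this
    refine ⟨a.snd, ?_⟩
    have hainr : (TrivSqZeroExt.inr a.snd : TrivSqZeroExt R C) = a := by
      refine TrivSqZeroExt.ext ?_ ?_ <;> simp [hfsta]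
    show (e.symm (TrivSqZeroExt.inr a.snd)) 1 = d
    rw [hainr, ha, e.symm_apply_apply]
    show (1 : TrivSqZeroExt R C).fst • d = d
    simp
  let E : C ≃ₗ[R] D := LinearEquiv.ofBijective g ⟨hg_inj, hg_surj⟩
  refine ⟨hC, ?_⟩
  obtain ⟨n, hn⟩ := hD.2
  refine ⟨n, fun N i hi => ?_⟩
  have iso : ModuleCat.of R C ≅ ModuleCat.of R D := E.toModuleIso
  have iso2 := ((Ext R (ModuleCat R) i).obj (Opposite.op N)).mapIso iso
  have := hn N i hi
  exact Equiv.subsingleton iso2.toLinearEquiv.toEquiv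
end
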